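/- Let (θ_n) be a [0,1]-valued martingale with respect to (F_n), and define the predictive scheme X_{n+1} | F_n ∼ Bernoulli(θ_n). Then for every n and every j ≥ 1, the conditional law of X_{n+j} given F_n is Bernoulli(θ_n); in particular the sequence (X_i) is conditionally identically distributed. -/

import Mathlib

open MeasureTheory

/-- For a `[0,1]`-valued martingale `θ` and the predictive scheme
`X_{n+1} | F_n ∼ Bernoulli(θ_n)` (encoded, for {0,1}-valued `X`, by
`E[X_{n+1} | F_n] = θ_n`), the conditional law of `X_{n+j}` given `F_n` is
`Bernoulli(θ_n)` for every `j ≥ 1`; in particular `(X_i)` is conditionally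
identically distributed. -/
theorem stmt17 {Ω : Type*} [m0 : MeasurableSpace Ω] (μ : Measure Ω) [IsProbabilityMeasure μ]
    (F : Filtration ℕ m0) (θ : ℕ → Ω → ℝ)
    (hmart : Martingale θ F μ)
    (hθ01 : ∀ n ω, θ n ω ∈ Set.Icc (0:ℝ) 1)
    (X : ℕ → Ω → ℝ)
    (hX01 : ∀ i ω, X i ω = 0 ∨ X i ω = 1)
    (hadapted : ∀ n, Measurable[F (n + 1)] (X (n + 1)))
    (hscheme : ∀ n, μ[X (n + 1) | F n] =ᵐ[μ] θ n) :
    ∀ n, ∀ j : ℕ, 1 ≤ j →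
      (μ[X (n + j) | F n] =ᵐ[μ] θ n) ∧
      (μ[X (n + j) | F n] =ᵐ[μ] μ[X (n + 1) | F n]) := by
  intro n j hj
  obtain ⟨k, rfl⟩ : ∃ k, j = k + 1 := ⟨j - 1, (Nat.succ_pred_eq_of_pos hj).symm⟩
  have h2 := condExp_condExp_of_le (F.mono (Nat.le_add_right n k)) (F.le (n + k))
    (f := X (n + k + 1)) (μ := μ)
  have h1 : μ[X (n + (k + 1)) | F n] =ᵐ[μ] θ n := by
    have : (n + (k + 1)) = (n + k) + 1 := by omega
    rw [this]
    exact h2.symm.trans ((condExp_congr_ae (hscheme (n + k))).trans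
      (hmart.condExp_ae_eq (Nat.le_add_right n k)))
  exact ⟨h1, h1.trans (hscheme n).symm⟩
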